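/- arXiv:1403.0562 — 2 statements merged into one kernel-verified Lean document; each statement's English description precedes it below -/
import Mathlib

section
/- Let K be an algebraically closed field of characteristic 0 or at least 5. Every nonsingular quartic form F over K whose automorphism group Aut(F) is isomorphic to the Klein four group C₂ × C₂ is K-equivalent to a Ciani quartic x⁴ + y⁴ + z⁴ + r·x²y² + s·y²z² + t·z²x² for some r, s, t ∈ K. -/
open MvPolynomial Matrix

noncomputable section

variable {K : Type} [Field K]

/-- The substitution of the linear change of variables given by a 3×3 matrix `M`
into a polynomial `F` in three variables, i.e. `F(M·(x,y,z)ᵗ)`. -/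
def matAct (M : Matrix (Fin 3) (Fin 3) K) (F : MvPolynomial (Fin 3) K) :
    MvPolynomial (Fin 3) K :=
  bind₁ (fun i => ∑ j, C (M i j) * X j) F

theorem matAct_one (F : MvPolynomial (Fin 3) K) : matAct 1 F = F := by
  have h : (fun i => ∑ j, C ((1 : Matrix (Fin 3) (Fin 3) K) i j) * X j)
      = (X : Fin 3 → MvPolynomial (Fin 3) K) := by
    funext i
    simp [Matrix.one_apply, apply_ite (C (σ := Fin 3) (R := K))]
  rw [matAct, h, bind₁_X_left, AlgHom.id_apply]

theorem matAct_mul (M N : Matrix (Fin 3) (Fin 3) K) (F : MvPolynomial (Fin 3) K) :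
    matAct (M * N) F = matAct N (matAct M F) := by
  have h : (fun i => (bind₁ fun i => ∑ j, C (N i j) * X j)
        ((fun i => ∑ j, C (M i j) * X j) i))
      = fun i => ∑ j, C ((M * N) i j) * (X j : MvPolynomial (Fin 3) K) := by
    funext i
    simp only [map_sum, _root_.map_mul, algHom_C, bind₁_X_right, Matrix.mul_apply,
      Finset.sum_mul, Finset.mul_sum, mul_assoc]
    exact Finset.sum_comm
  rw [matAct, matAct, matAct, bind₁_bind₁, h]

theorem matAct_smul (M : Matrix (Fin 3) (Fin 3) K) (c : K) (F : MvPolynomial (Fin 3) K) :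
    matAct M (c • F) = c • matAct M F := by
  simp [matAct]

/-- The group of matrices `A ∈ GL₃(K)` such that `F(A·(x,y,z)ᵗ) = λ·F` for some `λ ∈ Kˣ`. -/
def autGroup (F : MvPolynomial (Fin 3) K) : Subgroup (GL (Fin 3) K) where
  carrier := {A | ∃ c : Kˣ, matAct (A : Matrix (Fin 3) (Fin 3) K) F = (c : K) • F}
  one_mem' := ⟨1, by simp [Units.val_one, matAct_one]⟩
  mul_mem' := by
    rintro A B ⟨a, ha⟩ ⟨b, hb⟩
    refine ⟨a * b, ?_⟩
    calc matAct ((A * B : GL (Fin 3) K) : Matrix (Fin 3) (Fin 3) K) F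
        = matAct (B : Matrix (Fin 3) (Fin 3) K) (matAct (A : Matrix (Fin 3) (Fin 3) K) F) := by
          rw [Units.val_mul, matAct_mul]
      _ = (a : K) • matAct (B : Matrix (Fin 3) (Fin 3) K) F := by rw [ha, matAct_smul]
      _ = ((a * b : Kˣ) : K) • F := by rw [hb, smul_smul, Units.val_mul]
  inv_mem' := by
    rintro A ⟨a, ha⟩
    refine ⟨a⁻¹, ?_⟩
    rw [Units.val_inv_eq_inv_val, eq_inv_smul_iff₀ a.ne_zero]
    rw [← matAct_smul, ← ha, ← matAct_mul, ← Units.val_mul, mul_inv_cancel, Units.val_one,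
      matAct_one]

/-- The subgroup of scalar matrices inside `autGroup F`. -/
def scalarGroup (F : MvPolynomial (Fin 3) K) : Subgroup (autGroup F) where
  carrier := {A | ∃ c : Kˣ, ((A : GL (Fin 3) K) : Matrix (Fin 3) (Fin 3) K)
    = (c : K) • (1 : Matrix (Fin 3) (Fin 3) K)}
  one_mem' := ⟨1, by simp⟩
  mul_mem' := by
    rintro A B ⟨a, ha⟩ ⟨b, hb⟩
    refine ⟨a * b, ?_⟩
    push_cast
    rw [ha, hb, Matrix.smul_mul, Matrix.mul_smul, smul_smul, one_mul]
  inv_mem' := by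
    rintro A ⟨a, ha⟩
    refine ⟨a⁻¹, ?_⟩
    have h : ((A : GL (Fin 3) K) : Matrix (Fin 3) (Fin 3) K)
        * (((a⁻¹ : Kˣ) : K) • (1 : Matrix (Fin 3) (Fin 3) K)) = 1 := by
      rw [ha, Matrix.smul_mul, one_mul, smul_smul, ← Units.val_mul, mul_inv_cancel,
        Units.val_one, one_smul]
    calc (((A⁻¹ : autGroup F) : GL (Fin 3) K) : Matrix (Fin 3) (Fin 3) K)
        = (((A : GL (Fin 3) K) : Matrix (Fin 3) (Fin 3) K))⁻¹ := by
          rw [InvMemClass.coe_inv, Matrix.coe_units_inv]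
      _ = ((a⁻¹ : Kˣ) : K) • 1 := Matrix.inv_eq_right_inv h

instance scalarGroup_normal (F : MvPolynomial (Fin 3) K) : (scalarGroup F).Normal := by
  constructor
  rintro A ⟨a, ha⟩ g
  refine ⟨a, ?_⟩
  have hg : ((g : GL (Fin 3) K) : Matrix (Fin 3) (Fin 3) K)
      * (((g⁻¹ : autGroup F) : GL (Fin 3) K) : Matrix (Fin 3) (Fin 3) K) = 1 := by
    rw [InvMemClass.coe_inv, ← Units.val_mul, mul_inv_cancel, Units.val_one]
  show (((g * A * g⁻¹ : autGroup F) : GL (Fin 3) K) : Matrix (Fin 3) (Fin 3) K)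
      = (a : K) • (1 : Matrix (Fin 3) (Fin 3) K)
  rw [MulMemClass.coe_mul, MulMemClass.coe_mul, Units.val_mul, Units.val_mul, ha,
    Matrix.mul_smul, mul_one, Matrix.smul_mul, hg]

/-- The automorphism group of a plane quartic form: linear automorphisms up to scalars. -/
def projAut (F : MvPolynomial (Fin 3) K) : Type :=
  autGroup F ⧸ scalarGroup F

instance (F : MvPolynomial (Fin 3) K) : Group (projAut F) :=
  inferInstanceAs (Group (autGroup F ⧸ scalarGroup F))

/-- Nonsingularity of a ternary form: over an algebraic closure, the partial derivatives
have no common zero besides the origin. -/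
def QNonsingular (F : MvPolynomial (Fin 3) K) : Prop :=
  ∀ v : Fin 3 → AlgebraicClosure K,
    (∀ i, eval v (pderiv i (map (algebraMap K (AlgebraicClosure K)) F)) = 0) → v = 0

/-- Two ternary forms over `K` are `K`-equivalent if they differ by an invertible linear
change of variables, up to a nonzero scalar. -/
def kEquiv (F G : MvPolynomial (Fin 3) K) : Prop :=
  ∃ (A : GL (Fin 3) K) (c : Kˣ), matAct (A : Matrix (Fin 3) (Fin 3) K) F = (c : K) • G

/-!
Lift the two generators of `Aut(F) ≅ C₂ × C₂` to matrices `A`, `B`; their squares and their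
commutator are scalars. After rescaling, `A` and `B` are involutions, and in dimension three two
involutions that commute up to a scalar actually commute, so they can be diagonalized
simultaneously as sign matrices. In the new coordinates every monomial `xᵃ yᵇ zᶜ` of the form is
an eigenvector of both sign matrices, with eigenvalues given by characters of the parity vector
of `(a, b, c)`; since the two sign vectors and `(1, 1, 1)` span `(ZMod 2)³`, all monomials share
one parity vector. Nonsingularity at the coordinate points rules out odd exponents and forces the
coefficients of `x⁴`, `y⁴`, `z⁴` to be nonzero, and a diagonal rescaling makes them `1`.
-/

namespace MvPolynomial

variable {R σ : Type*} [CommSemiring R]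

theorem pderiv_bind₁ [Fintype σ] (f : σ → MvPolynomial σ R) (F : MvPolynomial σ R)
    (k : σ) : pderiv k (bind₁ f F) = ∑ i, bind₁ f (pderiv i F) * pderiv k (f i) := by
  classical
  induction F using MvPolynomial.induction_on with
  | C a => simp
  | add p q hp hq => simp [hp, hq, add_mul, Finset.sum_add_distrib]
  | mul_X p j hp =>
    have hX : ∀ i, bind₁ f p * bind₁ f (pderiv i (X j)) * pderiv k (f i)
        = if j = i then bind₁ f p * pderiv k (f j) else 0 := by
      intro i
      rcases eq_or_ne j i with rfl | h <;> simp [*]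
    simp only [_root_.map_mul, bind₁_X_right, pderiv_mul, map_add, add_mul,
      Finset.sum_add_distrib, hX, Finset.sum_ite_eq, Finset.mem_univ, if_true, hp, Finset.sum_mul]
    congr 1
    exact Finset.sum_congr rfl fun i _ => by ring

theorem eval_piSingle_monomial_eq_zero [DecidableEq σ] {k j : σ} {m : σ →₀ ℕ}
    (hjk : j ≠ k) (hj : m j ≠ 0) (c : R) : eval (Pi.single k 1) (monomial m c) = 0 := by
  rw [eval_monomial, Finsupp.prod, Finset.prod_eq_zero (Finsupp.mem_support_iff.mpr hj)
    (by rw [Pi.single_eq_of_ne hjk, zero_pow hj]), mul_zero]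

theorem eval_piSingle_pderiv_eq_zero [Fintype σ] [DecidableEq σ]
    {G : MvPolynomial σ R} {k : σ} (hG : ∀ m ∈ G.support, 2 ≤ ∑ i ∈ {k}ᶜ, m i) (l : σ) :
    eval (Pi.single k 1) (pderiv l G) = 0 := by
  rw [G.as_sum, map_sum, map_sum]
  refine Finset.sum_eq_zero fun m hm => ?_
  rw [pderiv_monomial]
  obtain ⟨j, hjk, hj⟩ : ∃ j ≠ k, (m - Finsupp.single l 1 : σ →₀ ℕ) j ≠ 0 := by
    by_contra! h
    have hle : ∑ i ∈ {k}ᶜ, m i ≤ ∑ i ∈ {k}ᶜ, Finsupp.single l 1 i :=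
      Finset.sum_le_sum fun i hi => by
        have := h i (by simpa using hi)
        simp only [Finsupp.tsub_apply] at this
        omega
    have hone : ∑ i ∈ {k}ᶜ, Finsupp.single l 1 i ≤ 1 := by
      simp only [Finsupp.single_apply, Finset.sum_ite_eq]
      split_ifs <;> omega
    have := hG m hm
    omega
  exact eval_piSingle_monomial_eq_zero hjk hj _

theorem IsHomogeneous.sum_eq_of_mem_support [Fintype σ] {G : MvPolynomial σ R} {n : ℕ}
    (hG : G.IsHomogeneous n) {m : σ →₀ ℕ} (hm : m ∈ G.support) : ∑ i, m i = n := by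
  rw [← Finsupp.degree_eq_sum, Finsupp.degree_eq_weight_one]
  exact hG (mem_support_iff.mp hm)

theorem IsHomogeneous.sum_natCast_eq_zero_of_mem_support [Fintype σ] {G : MvPolynomial σ R}
    {n : ℕ} (hG : G.IsHomogeneous n) (hn : Even n) {m : σ →₀ ℕ} (hm : m ∈ G.support) :
    ∑ i, (m i : ZMod 2) = 0 := by
  rw [← Nat.cast_sum, hG.sum_eq_of_mem_support hm, ZMod.natCast_eq_zero_iff_even]
  exact hn

end MvPolynomial

def IsNonsingular {σ : Type*} (F : MvPolynomial σ K) : Prop :=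
  ∀ v : σ → K, (∀ i, eval v (pderiv i F) = 0) → v = 0

theorem QNonsingular.isNonsingular {F : MvPolynomial (Fin 3) K} (h : QNonsingular F) :
    IsNonsingular F := by
  intro v hv
  let φ := algebraMap K (AlgebraicClosure K)
  have h0 := h (φ ∘ v) fun i => by
    rw [pderiv_map, eval_map]
    exact (eval₂_comp_left φ (RingHom.id K) v _).symm.trans
      ((congrArg φ (hv i)).trans (map_zero φ))
  funext i
  exact φ.injective ((congrFun h0 i).trans (map_zero φ).symm)

theorem IsNonsingular.exists_mem_support_sum_compl_lt_two {σ : Type*} [Fintype σ]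
    [DecidableEq σ] {G : MvPolynomial σ K} (hG : IsNonsingular G) (k : σ) :
    ∃ m ∈ G.support, ∑ i ∈ {k}ᶜ, m i < 2 := by
  by_contra! h
  have := congrFun (hG _ (eval_piSingle_pderiv_eq_zero h)) k
  simp at this

theorem eval_matAct (M : Matrix (Fin 3) (Fin 3) K) (F : MvPolynomial (Fin 3) K)
    (v : Fin 3 → K) : eval v (matAct M F) = eval (M *ᵥ v) F := by
  change eval₂Hom (RingHom.id K) v (bind₁ _ F) = _
  rw [eval₂Hom_bind₁]
  congr 2
  funext i
  simp [mulVec, dotProduct]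

theorem pderiv_matAct (M : Matrix (Fin 3) (Fin 3) K) (F : MvPolynomial (Fin 3) K) (k : Fin 3) :
    pderiv k (matAct M F) = ∑ i, C (M i k) * matAct M (pderiv i F) := by
  rw [matAct, pderiv_bind₁]
  refine Finset.sum_congr rfl fun i _ => ?_
  simp [pderiv_X, Pi.single_apply, mul_comm, matAct]

theorem IsNonsingular.matAct {F : MvPolynomial (Fin 3) K} (hF : IsNonsingular F)
    {M : Matrix (Fin 3) (Fin 3) K} (hM : IsUnit M) : IsNonsingular (matAct M F) := by
  intro v hv
  set g : Fin 3 → K := fun i => eval (M *ᵥ v) (pderiv i F)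
  have hg : g ᵥ* M = 0 ᵥ* M := by
    funext k
    have := hv k
    simp only [pderiv_matAct, map_sum, _root_.map_mul, eval_C, eval_matAct] at this
    simpa [vecMul, dotProduct, mul_comm] using this
  have hMv : M *ᵥ v = M *ᵥ 0 := by
    rw [mulVec_zero]
    exact hF _ fun i => congrFun (vecMul_injective_of_isUnit hM hg) i
  exact mulVec_injective_of_isUnit hM hMv

theorem matAct_diagonal (d : Fin 3 → K) (G : MvPolynomial (Fin 3) K) :
    matAct (diagonal d) G = bind₁ (fun i => C (d i) * X i) G := by
  unfold matAct
  congr 2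
  funext i
  rw [Finset.sum_eq_single i (fun j _ hj => by rw [diagonal_apply_ne _ hj.symm, C_0, zero_mul])
    (by simp), diagonal_apply_eq]

theorem coeff_matAct_diagonal (d : Fin 3 → K) (G : MvPolynomial (Fin 3) K) (m : Fin 3 →₀ ℕ) :
    coeff m (matAct (diagonal d) G) = coeff m G * ∏ i, d i ^ m i := by
  classical
  rw [matAct_diagonal]
  induction G using MvPolynomial.induction_on' with
  | monomial u a =>
    have : bind₁ (fun i => C (d i) * X i) (monomial u a) = monomial u (a * ∏ i, d i ^ u i) := by
      rw [bind₁_monomial, monomial_eq]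
      change C a * u.prod (fun i e => (C (d i) * X i) ^ e) = _
      rw [Finsupp.prod_fintype _ _ (by simp), Finsupp.prod_fintype _ _ (by simp)]
      simp only [mul_pow, Finset.prod_mul_distrib, ← map_pow, ← map_prod, C_mul, mul_assoc]
    rw [this, coeff_monomial, coeff_monomial]
    split_ifs with h
    · rw [h]
    · rw [zero_mul]
  | add p q hp hq => rw [map_add, coeff_add, coeff_add, hp, hq, add_mul]

theorem matAct_smul_one {G : MvPolynomial (Fin 3) K} {n : ℕ} (hG : G.IsHomogeneous n) (c : K) :
    matAct (c • 1) G = c ^ n • G := by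
  ext m
  rw [smul_one_eq_diagonal, coeff_matAct_diagonal, coeff_smul, smul_eq_mul, mul_comm]
  by_cases hm : m ∈ G.support
  · rw [Finset.prod_pow_eq_pow_sum, hG.sum_eq_of_mem_support hm]
  · simp [notMem_support_iff.mp hm]

theorem matAct_smul_left {G : MvPolynomial (Fin 3) K} {n : ℕ} (hG : G.IsHomogeneous n) (c : K)
    (A : Matrix (Fin 3) (Fin 3) K) : matAct (c • A) G = c ^ n • matAct A G := by
  rw [← smul_one_mul, matAct_mul, matAct_smul_one hG, matAct_smul]

theorem isHomogeneous_matAct {G : MvPolynomial (Fin 3) K} {n : ℕ} (hG : G.IsHomogeneous n)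
    (M : Matrix (Fin 3) (Fin 3) K) : (matAct M G).IsHomogeneous n := by
  have hlin : ∀ i, (∑ j, C (M i j) * X j : MvPolynomial (Fin 3) K).IsHomogeneous 1 := fun i =>
    IsHomogeneous.sum _ _ _ fun j _ => isHomogeneous_C_mul_X _ _
  simpa [matAct] using hG.aeval _ hlin

theorem exists_forall_ne_eq_one_of_sum_eq_zero {p : Fin 3 → ZMod 2} (hp : ∑ i, p i = 0)
    (hp0 : p ≠ 0) : ∃ k, ∀ i ≠ k, p i = 1 := by
  revert p
  decide

theorem IsNonsingular.even_of_parity_eq {G : MvPolynomial (Fin 3) K} (hG : IsNonsingular G)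
    {n : ℕ} (hGn : G.IsHomogeneous n) (hn : Even n)
    (hpar : ∀ m ∈ G.support, ∀ m' ∈ G.support, ∀ i, (m i : ZMod 2) = m' i) :
    ∀ m ∈ G.support, ∀ i, Even (m i) := by
  obtain ⟨m₀, hm₀, -⟩ := hG.exists_mem_support_sum_compl_lt_two 0
  set p : Fin 3 → ZMod 2 := fun i => m₀ i
  have hp : ∑ i, p i = 0 := hGn.sum_natCast_eq_zero_of_mem_support hn hm₀
  by_cases hp0 : p = 0
  · intro m hm i
    rw [← ZMod.natCast_eq_zero_iff_even, hpar m hm m₀ hm₀]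
    exact congrFun hp0 i
  obtain ⟨k, hk⟩ := exists_forall_ne_eq_one_of_sum_eq_zero hp hp0
  obtain ⟨m, hm, hlt⟩ := hG.exists_mem_support_sum_compl_lt_two k
  have hodd : ∀ i ∈ ({k}ᶜ : Finset (Fin 3)), 1 ≤ m i := fun i hi => by
    have := (hpar m hm m₀ hm₀ i).trans (hk i (by simpa using hi))
    exact Nat.one_le_iff_ne_zero.mpr fun h => by simp [h] at this
  have := Finset.card_nsmul_le_sum ({k}ᶜ : Finset (Fin 3)) (fun i => m i) 1 hodd
  simp [Finset.card_compl] at this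
  omega

theorem IsNonsingular.coeff_single_ne_zero {σ : Type*} [Fintype σ] [DecidableEq σ]
    {G : MvPolynomial σ K} (hG : IsNonsingular G) {n : ℕ} (hGn : G.IsHomogeneous n)
    (heven : ∀ m ∈ G.support, ∀ i, Even (m i)) (k : σ) : coeff (Finsupp.single k n) G ≠ 0 := by
  obtain ⟨m, hm, hlt⟩ := hG.exists_mem_support_sum_compl_lt_two k
  have hzero : ∀ i ∈ ({k}ᶜ : Finset σ), m i = 0 := by
    refine Finset.sum_eq_zero_iff.mp ?_
    have heS : Even (∑ i ∈ ({k}ᶜ : Finset σ), m i) := Finset.even_sum _ fun i _ => heven m hm i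
    generalize ∑ i ∈ ({k}ᶜ : Finset σ), m i = S at heS hlt ⊢
    obtain ⟨r, rfl⟩ := heS
    omega
  have hmk : m k = n := by
    rw [← hGn.sum_eq_of_mem_support hm, ← Finset.sum_compl_add_sum {k}, Finset.sum_eq_zero hzero]
    simp
  have : m = Finsupp.single k n := by
    ext i
    rcases eq_or_ne i k with rfl | hik
    · simp [hmk]
    · simp [hzero i (by simpa using hik), hik.symm]
  exact mem_support_iff.mp (this ▸ hm)

def evenQuartic (a : Fin 3 → K) (r s t : K) : MvPolynomial (Fin 3) K :=
  C (a 0) * X 0 ^ 4 + C (a 1) * X 1 ^ 4 + C (a 2) * X 2 ^ 4 + C r * X 0 ^ 2 * X 1 ^ 2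
    + C s * X 1 ^ 2 * X 2 ^ 2 + C t * X 2 ^ 2 * X 0 ^ 2

theorem eq_evenQuartic {G : MvPolynomial (Fin 3) K} (h4 : G.IsHomogeneous 4)
    (heven : ∀ m ∈ G.support, ∀ i, Even (m i)) :
    G = evenQuartic (fun k => coeff (Finsupp.single k 4) G)
      (coeff (Finsupp.single 0 2 + Finsupp.single 1 2) G)
      (coeff (Finsupp.single 1 2 + Finsupp.single 2 2) G)
      (coeff (Finsupp.single 0 2 + Finsupp.single 2 2) G) := by
  open Finsupp in
  have hsupp : G.support ⊆ {single 0 4, single 1 4, single 2 4, single 0 2 + single 1 2,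
      single 1 2 + single 2 2, single 0 2 + single 2 2} := by
    intro m hm
    have hm3 : m = single 0 (m 0) + single 1 (m 1) + single 2 (m 2) := by
      ext i; fin_cases i <;> simp
    have hsum := h4.sum_eq_of_mem_support hm
    rw [Fin.sum_univ_three] at hsum
    obtain ⟨a, ha⟩ := heven m hm 0
    obtain ⟨b, hb⟩ := heven m hm 1
    obtain ⟨c, hc⟩ := heven m hm 2
    rcases (by omega : (m 0 = 4 ∧ m 1 = 0 ∧ m 2 = 0) ∨ (m 0 = 0 ∧ m 1 = 4 ∧ m 2 = 0)
      ∨ (m 0 = 0 ∧ m 1 = 0 ∧ m 2 = 4) ∨ (m 0 = 2 ∧ m 1 = 2 ∧ m 2 = 0)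
      ∨ (m 0 = 0 ∧ m 1 = 2 ∧ m 2 = 2) ∨ (m 0 = 2 ∧ m 1 = 0 ∧ m 2 = 2))
      with h | h | h | h | h | h <;>
      rw [hm3] <;> simp [h]
  conv_lhs => rw [G.as_sum, Finset.sum_subset hsupp fun m _ hm => by
    rw [MvPolynomial.notMem_support_iff.mp hm, monomial_zero]]
  simp (disch := simp [Finsupp.ext_iff, Fin.forall_fin_succ]) only [Finset.sum_insert,
    Finset.sum_singleton]
  simp only [monomial_single_add, ← C_mul_X_pow_eq_monomial, evenQuartic]
  ring

theorem matAct_diagonal_evenQuartic (d a : Fin 3 → K) (r s t : K) :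
    matAct (diagonal d) (evenQuartic a r s t) = evenQuartic (fun i => a i * d i ^ 4)
      (r * d 0 ^ 2 * d 1 ^ 2) (s * d 1 ^ 2 * d 2 ^ 2) (t * d 2 ^ 2 * d 0 ^ 2) := by
  simp only [matAct_diagonal, evenQuartic, map_add, _root_.map_mul, map_pow, bind₁_C_right,
    bind₁_X_right]
  ring

theorem exists_matAct_diagonal_eq_evenQuartic_one [IsAlgClosed K] {a : Fin 3 → K}
    (ha : ∀ i, a i ≠ 0) (r s t : K) :
    ∃ d : Fin 3 → K, (∀ i, d i ≠ 0) ∧ ∃ r' s' t' : K,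
      matAct (diagonal d) (evenQuartic a r s t) = evenQuartic 1 r' s' t' := by
  choose d hd using fun i => IsAlgClosed.exists_pow_nat_eq (a i)⁻¹ (by norm_num : 0 < 4)
  refine ⟨d, fun i h => ?_, r * d 0 ^ 2 * d 1 ^ 2, s * d 1 ^ 2 * d 2 ^ 2, t * d 2 ^ 2 * d 0 ^ 2, ?_⟩
  · exact ha i (inv_eq_zero.mp (by rw [← hd i, h]; norm_num))
  · rw [matAct_diagonal_evenQuartic]
    congr
    funext i
    rw [hd i, mul_inv_cancel₀ (ha i), Pi.one_apply]

def signChar : AddChar (ZMod 2) K :=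
  AddChar.zmodChar 2 (by norm_num : (-1 : K) ^ 2 = 1)

theorem signChar_one : signChar (1 : ZMod 2) = (-1 : K) := by
  rw [signChar, AddChar.zmodChar_apply]
  exact pow_one _

theorem signChar_injective (h2 : (2 : K) ≠ 0) : Function.Injective (signChar (K := K)) := by
  have hne : (1 : K) ≠ -1 := fun h => h2 (by linear_combination h)
  have hcases : ∀ z : ZMod 2, z = 0 ∨ z = 1 := by decide
  intro x y h
  rcases hcases x with rfl | rfl <;> rcases hcases y with rfl | rfl <;>
    simp_all [signChar_one, eq_comm]

theorem signChar_mul_self (x : ZMod 2) : signChar x * signChar x = (1 : K) := by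
  rw [← AddChar.map_add_eq_mul, CharTwo.add_self_eq_zero, AddChar.map_zero_eq_one]

theorem prod_signChar_pow (e : Fin 3 → ZMod 2) (m : Fin 3 →₀ ℕ) :
    ∏ i, signChar (e i) ^ m i = (signChar (e ⬝ᵥ fun i => (m i : ZMod 2)) : K) := by
  simp only [← AddChar.map_nsmul_eq_pow, Fin.prod_univ_three, dotProduct, Fin.sum_univ_three,
    AddChar.map_add_eq_mul, nsmul_eq_mul, mul_comm]

theorem prod_pow_eq_of_matAct_diagonal_eq_smul {G : MvPolynomial (Fin 3) K} {d : Fin 3 → K}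
    {μ : K} (h : matAct (diagonal d) G = μ • G) {m : Fin 3 →₀ ℕ} (hm : m ∈ G.support) :
    ∏ i, d i ^ m i = μ := by
  have := congrArg (coeff m) h
  rw [coeff_matAct_diagonal, coeff_smul, smul_eq_mul, mul_comm μ] at this
  exact mul_left_cancel₀ (mem_support_iff.mp hm) this

set_option synthInstance.maxSize 1024 in
theorem eq_zero_of_dotProduct_eq_zero {e f w : Fin 3 → ZMod 2} (he : ∀ c, e ≠ fun _ => c)
    (hf : ∀ c, f ≠ fun _ => c) (hef : ∀ c, e + f ≠ fun _ => c) (hew : e ⬝ᵥ w = 0)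
    (hfw : f ⬝ᵥ w = 0) (hw : ∑ i, w i = 0) : w = 0 := by
  revert e f w
  decide

section Involutions

variable {n : Type*} [Fintype n] [DecidableEq n]

theorem exists_isUnit_forall_transpose_mem_of_span_eq_top {S : Set (n → K)}
    (hS : Submodule.span K S = ⊤) : ∃ P : Matrix n n K, IsUnit P ∧ ∀ j, Pᵀ j ∈ S := by
  obtain ⟨b, hbS, hspan, hli⟩ := exists_linearIndependent K S
  let B := Module.Basis.mk hli (by rw [Subtype.range_coe, hspan, hS])
  let B' := B.reindex (B.indexEquiv (Pi.basisFun K n))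
  have := (Pi.basisFun K n).invertibleToMatrix B'
  refine ⟨(Pi.basisFun K n).toMatrix B', isUnit_of_invertible _, fun j => ?_⟩
  have hcol : ((Pi.basisFun K n).toMatrix B')ᵀ j = B' j := by
    ext i
    simp [Module.Basis.toMatrix_apply]
  rw [hcol]
  simpa [B', B] using hbS (Subtype.mem _)

theorem mul_one_add_smul_self {A : Matrix n n K} (hA : A * A = 1) {s : K} (hs : s * s = 1) :
    A * (1 + s • A) = s • (1 + s • A) := by
  rw [mul_add, mul_one, Matrix.mul_smul, hA, smul_add, smul_smul, hs, one_smul, add_comm]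

/-- `(1 + (-1)ˣ M)(1 + (-1)ʸ N)` maps into the joint eigenspace of `M` and `N` for the
eigenvalues `(-1)ˣ` and `(-1)ʸ`, and these four matrices sum to `4`. -/
theorem span_jointEigenvectors_eq_top (h2 : (2 : K) ≠ 0) {M N : Matrix n n K}
    (hM : M * M = 1) (hN : N * N = 1) (hMN : M * N = N * M) :
    Submodule.span K {v | ∃ x y : ZMod 2, M *ᵥ v = (signChar x : K) • v ∧
      N *ᵥ v = (signChar y : K) • v} = ⊤ := by
  set Q : ZMod 2 → ZMod 2 → Matrix n n K :=
    fun x y => (1 + (signChar x : K) • M) * (1 + (signChar y : K) • N)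
  have hQ : ∀ x y w, Q x y *ᵥ w ∈
      {v | ∃ x y : ZMod 2, M *ᵥ v = (signChar x : K) • v ∧ N *ᵥ v = (signChar y : K) • v} := by
    refine fun x y w => ⟨x, y, ?_, ?_⟩
    · rw [mulVec_mulVec, ← mul_assoc, mul_one_add_smul_self hM (signChar_mul_self x),
        smul_mul_assoc, smul_mulVec]
    · have hcomm : Commute N (1 + (signChar x : K) • M) :=
        (Commute.one_right N).add_right ((Commute.symm hMN).smul_right _)
      rw [mulVec_mulVec, hcomm.left_comm, mul_one_add_smul_self hN (signChar_mul_self y),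
        mul_smul_comm, smul_mulVec]
  have hsum : Q 0 0 + Q 0 1 + Q 1 0 + Q 1 1 = (4 : K) • 1 := by
    simp only [Q, AddChar.map_zero_eq_one, signChar_one, one_smul, neg_smul,
      ofNat_smul_eq_nsmul (R := K) 4]
    noncomm_ring
  have h4 : (4 : K) ≠ 0 := by
    have := mul_ne_zero h2 h2
    norm_num at this
    exact this
  refine Submodule.eq_top_iff'.mpr fun v => ?_
  have hv : v = Q 0 0 *ᵥ ((4 : K)⁻¹ • v) + Q 0 1 *ᵥ ((4 : K)⁻¹ • v)
      + Q 1 0 *ᵥ ((4 : K)⁻¹ • v) + Q 1 1 *ᵥ ((4 : K)⁻¹ • v) := by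
    rw [← add_mulVec, ← add_mulVec, ← add_mulVec, hsum, smul_mulVec, one_mulVec, smul_smul,
      mul_inv_cancel₀ h4, one_smul]
  rw [hv]
  exact add_mem (add_mem (add_mem (Submodule.subset_span (hQ _ _ _))
    (Submodule.subset_span (hQ _ _ _))) (Submodule.subset_span (hQ _ _ _)))
    (Submodule.subset_span (hQ _ _ _))

theorem exists_diagonalization_of_commute (h2 : (2 : K) ≠ 0) {M N : Matrix n n K}
    (hM : M * M = 1) (hN : N * N = 1) (hMN : M * N = N * M) :
    ∃ (P : Matrix n n K) (e f : n → ZMod 2), IsUnit P ∧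
      M * P = P * diagonal (fun i => signChar (e i)) ∧
      N * P = P * diagonal (fun i => signChar (f i)) := by
  obtain ⟨P, hP, hcol⟩ :=
    exists_isUnit_forall_transpose_mem_of_span_eq_top (span_jointEigenvectors_eq_top h2 hM hN hMN)
  choose e f he hf using hcol
  refine ⟨P, e, f, hP, ?_, ?_⟩ <;> ext i j <;> rw [mul_diagonal]
  · exact (congrFun (he j) i).trans (mul_comm _ _)
  · exact (congrFun (hf j) i).trans (mul_comm _ _)

theorem exists_smul_mul_self_eq_one [IsAlgClosed K] {A : Matrix n n K} {α : K} (hα : α ≠ 0)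
    (hA : A * A = α • 1) : ∃ s ≠ (0 : K), (s • A) * (s • A) = 1 := by
  obtain ⟨s, hs⟩ := IsAlgClosed.exists_pow_nat_eq α⁻¹ (by norm_num : 0 < 2)
  refine ⟨s, fun h => hα (by simpa [h, eq_comm] using hs), ?_⟩
  rw [smul_mul_smul_comm, hA, smul_smul, ← sq, hs, inv_mul_cancel₀ hα, one_smul]

/-- Comparing determinants gives `γ ^ dim = 1`, and `N = γ ^ 2 • N` gives `γ ^ 2 = 1`. -/
theorem commute_of_mul_eq_smul_mul (hn : Odd (Fintype.card n)) {M N : Matrix n n K}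
    (hM : M * M = 1) (hN : N * N = 1) {γ : K} (h : N * M = γ • (M * N)) : M * N = N * M := by
  have : Nonempty n := Fintype.card_pos_iff.mp hn.pos
  have hdet : det M * det N ≠ 0 := by
    refine mul_ne_zero (fun h0 => ?_) (fun h0 => ?_)
    · simpa [h0] using congrArg det hM
    · simpa [h0] using congrArg det hN
  have hγn : γ ^ Fintype.card n = 1 := by
    have := congrArg det h
    rw [det_smul, det_mul, det_mul, mul_comm (det N)] at this
    exact (mul_eq_right₀ hdet).mp this.symm
  have hγ2 : γ ^ 2 = 1 := by
    have hN' : N = γ ^ 2 • N := calc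
      N = N * M * M := by rw [mul_assoc, hM, mul_one]
      _ = γ ^ 2 • N := by
        rw [h, smul_mul_assoc, mul_assoc, h, Matrix.mul_smul, ← mul_assoc, hM, one_mul, smul_smul,
          sq]
    have hN0 : N ≠ 0 := fun h0 => one_ne_zero (by rw [← hN, h0, zero_mul])
    have : (γ ^ 2 - 1) • N = 0 := by rw [sub_smul, one_smul, ← hN', sub_self]
    rcases smul_eq_zero.mp this with h | h
    · exact sub_eq_zero.mp h
    · exact absurd h hN0
  obtain ⟨k, hk⟩ := hn
  have hγ : γ = 1 := by rwa [hk, pow_succ, pow_mul, hγ2, one_pow, one_mul] at hγn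
  rw [h, hγ, one_smul]

end Involutions

theorem exists_klein_generators {G : Type*} [Group G] {N : Subgroup G} [N.Normal]
    (φ : G ⧸ N ≃* Multiplicative (ZMod 2) × Multiplicative (ZMod 2)) :
    ∃ a b : G, a * a ∈ N ∧ b * b ∈ N ∧ (∃ z ∈ N, b * a = a * b * z) ∧
      a ∉ N ∧ b ∉ N ∧ a * b ∉ N := by
  let π : G →* Multiplicative (ZMod 2) × Multiplicative (ZMod 2) :=
    φ.toMonoidHom.comp (QuotientGroup.mk' N)
  have hπ : ∀ x, x ∈ N ↔ π x = 1 := fun x => by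
    simp [π, QuotientGroup.eq_one_iff]
  have hsurj : Function.Surjective π := φ.surjective.comp (QuotientGroup.mk'_surjective N)
  obtain ⟨a, ha⟩ := hsurj (Multiplicative.ofAdd 1, 1)
  obtain ⟨b, hb⟩ := hsurj (1, Multiplicative.ofAdd 1)
  refine ⟨a, b, ?_, ?_, ⟨(a * b)⁻¹ * (b * a), ?_, by group⟩, ?_, ?_, ?_⟩ <;>
    simp only [hπ, map_mul, map_inv, ha, hb] <;> decide

theorem mem_scalarGroup_iff {F : MvPolynomial (Fin 3) K} (a : autGroup F) :
    a ∈ scalarGroup F ↔ ∃ c : K, ((a : GL (Fin 3) K) : Matrix (Fin 3) (Fin 3) K) = c • 1 := by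
  refine ⟨fun ⟨c, hc⟩ => ⟨c, hc⟩, fun ⟨c, hc⟩ => ?_⟩
  have hc0 : c ≠ 0 := by
    rintro rfl
    exact (a : GL (Fin 3) K).ne_zero (by rw [hc, zero_smul])
  exact ⟨Units.mk0 c hc0, hc⟩

theorem smul_ne_smul_one_of_notMem_scalarGroup {F : MvPolynomial (Fin 3) K} {a : autGroup F}
    (ha : a ∉ scalarGroup F) {s : K} (hs : s ≠ 0) (c : K) :
    s • ((a : GL (Fin 3) K) : Matrix (Fin 3) (Fin 3) K) ≠ c • 1 := fun h =>
  ha ((mem_scalarGroup_iff a).mpr ⟨s⁻¹ * c, by rw [← smul_smul, ← h, smul_smul,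
    inv_mul_cancel₀ hs, one_smul]⟩)

/-- The images of `M` and `N` in `PGL₃(K)` generate a Klein four-group of projective
automorphisms of `F`. -/
structure IsKleinPair (F : MvPolynomial (Fin 3) K) (M N : Matrix (Fin 3) (Fin 3) K) : Prop where
  mul_self_left : M * M = 1
  mul_self_right : N * N = 1
  commute : M * N = N * M
  semiInvariant_left : ∃ μ : K, matAct M F = μ • F
  semiInvariant_right : ∃ ν : K, matAct N F = ν • F
  ne_smul_one_left : ∀ c : K, M ≠ c • 1
  ne_smul_one_right : ∀ c : K, N ≠ c • 1
  ne_smul_one_mul : ∀ c : K, M * N ≠ c • 1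

theorem IsKleinPair.of_mul_eq_mul {F : MvPolynomial (Fin 3) K}
    {M N M' N' P : Matrix (Fin 3) (Fin 3) K} (h : IsKleinPair F M N) (hP : IsUnit P)
    (hM : M * P = P * M') (hN : N * P = P * N') : IsKleinPair (matAct P F) M' N' := by
  have hMN : M * N * P = P * (M' * N') := by rw [mul_assoc, hN, ← mul_assoc, hM, mul_assoc]
  have hNM : N * M * P = P * (N' * M') := by rw [mul_assoc, hM, ← mul_assoc, hN, mul_assoc]
  have mul_self {A A' : Matrix (Fin 3) (Fin 3) K} (hA : A * P = P * A') (hAA : A * A = 1) :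
      A' * A' = 1 :=
    hP.mul_left_cancel (by rw [← mul_assoc, ← hA, mul_assoc, ← hA, ← mul_assoc, hAA, one_mul,
      mul_one])
  have semiInvariant {A A' : Matrix (Fin 3) (Fin 3) K} (hA : A * P = P * A')
      (hAF : ∃ μ : K, matAct A F = μ • F) : ∃ μ : K, matAct A' (matAct P F) = μ • matAct P F := by
    obtain ⟨μ, hμ⟩ := hAF
    exact ⟨μ, by rw [← matAct_mul, ← hA, matAct_mul, hμ, matAct_smul]⟩
  have ne_smul_one {A A' : Matrix (Fin 3) (Fin 3) K} (hA : A * P = P * A')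
      (hAs : ∀ c : K, A ≠ c • 1) (c : K) : A' ≠ c • 1 := fun h' =>
    hAs c (hP.mul_right_cancel (by rw [hA, h', Matrix.mul_smul, smul_mul_assoc, mul_one,
      one_mul]))
  exact ⟨mul_self hM h.mul_self_left, mul_self hN h.mul_self_right,
    hP.mul_left_cancel (by rw [← hMN, ← hNM, h.commute]), semiInvariant hM h.semiInvariant_left,
    semiInvariant hN h.semiInvariant_right, ne_smul_one hM h.ne_smul_one_left,
    ne_smul_one hN h.ne_smul_one_right, ne_smul_one hMN h.ne_smul_one_mul⟩

/-- The sign vectors `e`, `f`, `e + f` are nonconstant, so together with `(1, 1, 1)` they span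
`(ZMod 2)³`; the characters they define on the monomials of `G` thus determine the parity of
every exponent. -/
theorem IsKleinPair.natCast_eq_of_mem_support (h2 : (2 : K) ≠ 0) {G : MvPolynomial (Fin 3) K}
    {n : ℕ} (hGn : G.IsHomogeneous n) (hn : Even n) {e f : Fin 3 → ZMod 2}
    (h : IsKleinPair G (diagonal fun i => signChar (e i)) (diagonal fun i => signChar (f i))) :
    ∀ m ∈ G.support, ∀ m' ∈ G.support, ∀ i, (m i : ZMod 2) = m' i := by
  have nonconst {e : Fin 3 → ZMod 2}
      (he : ∀ c : K, (diagonal fun i => signChar (e i)) ≠ c • 1) (c : ZMod 2) :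
      e ≠ fun _ => c := fun hc =>
    he (signChar c) (by rw [hc, smul_one_eq_diagonal])
  have hef : (diagonal fun i => signChar (e i)) * (diagonal fun i => signChar (f i))
      = diagonal fun i => (signChar ((e + f) i) : K) := by
    rw [diagonal_mul_diagonal]
    simp only [Pi.add_apply, AddChar.map_add_eq_mul]
  have dot_eq {e : Fin 3 → ZMod 2}
      (he : ∃ μ : K, matAct (diagonal fun i => signChar (e i)) G = μ • G)
      {m m' : Fin 3 →₀ ℕ} (hm : m ∈ G.support) (hm' : m' ∈ G.support) :
      (e ⬝ᵥ fun i => (m i : ZMod 2)) = e ⬝ᵥ fun i => (m' i : ZMod 2) := by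
    obtain ⟨μ, hμ⟩ := he
    apply signChar_injective h2
    rw [← prod_signChar_pow, ← prod_signChar_pow, prod_pow_eq_of_matAct_diagonal_eq_smul hμ hm,
      prod_pow_eq_of_matAct_diagonal_eq_smul hμ hm']
  intro m hm m' hm' i
  set p : Fin 3 → ZMod 2 := fun i => (m i : ZMod 2)
  set p' : Fin 3 → ZMod 2 := fun i => (m' i : ZMod 2)
  have hw := eq_zero_of_dotProduct_eq_zero (w := p - p')
    (nonconst h.ne_smul_one_left) (nonconst h.ne_smul_one_right)
    (nonconst (hef ▸ h.ne_smul_one_mul))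
    (by rw [dotProduct_sub, dot_eq h.semiInvariant_left hm hm', sub_self])
    (by rw [dotProduct_sub, dot_eq h.semiInvariant_right hm hm', sub_self])
    (by
      simp only [Pi.sub_apply]
      rw [Finset.sum_sub_distrib, hGn.sum_natCast_eq_zero_of_mem_support hn hm,
        hGn.sum_natCast_eq_zero_of_mem_support hn hm', sub_self])
  exact sub_eq_zero.mp (congrFun hw i)

theorem exists_isKleinPair [IsAlgClosed K] {F : MvPolynomial (Fin 3) K} {d : ℕ}
    (hF : F.IsHomogeneous d)
    (φ : projAut F ≃* Multiplicative (ZMod 2) × Multiplicative (ZMod 2)) :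
    ∃ M N : Matrix (Fin 3) (Fin 3) K, IsKleinPair F M N := by
  obtain ⟨a, b, ⟨α, hα⟩, ⟨β, hβ⟩, ⟨z, ⟨γ, hγ⟩, hba⟩, ha, hb, hab⟩ := exists_klein_generators φ
  set A : Matrix (Fin 3) (Fin 3) K := ((a : GL (Fin 3) K) : Matrix (Fin 3) (Fin 3) K)
  set B : Matrix (Fin 3) (Fin 3) K := ((b : GL (Fin 3) K) : Matrix (Fin 3) (Fin 3) K)
  simp only [Subgroup.coe_mul, Units.val_mul] at hα hβ
  have hBA : B * A = (γ : K) • (A * B) := by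
    have := congrArg (fun g : autGroup F => ((g : GL (Fin 3) K) : Matrix (Fin 3) (Fin 3) K)) hba
    simp only [Subgroup.coe_mul, Units.val_mul] at this
    rw [this, hγ, Matrix.mul_smul, mul_one]
  obtain ⟨s, hs, hM⟩ := exists_smul_mul_self_eq_one α.ne_zero hα
  obtain ⟨t, ht, hN⟩ := exists_smul_mul_self_eq_one β.ne_zero hβ
  have semiInvariant (c : K) (g : autGroup F) :
      ∃ μ : K, matAct (c • ((g : GL (Fin 3) K) : Matrix (Fin 3) (Fin 3) K)) F = μ • F := by
    obtain ⟨u, hu⟩ := g.2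
    exact ⟨c ^ d * u, by rw [matAct_smul_left hF, hu, smul_smul]⟩
  have hMN : (s • A) * (t • B)
      = (s * t) • (((a * b : autGroup F) : GL (Fin 3) K) : Matrix (Fin 3) (Fin 3) K) := by
    rw [smul_mul_smul_comm]
    rfl
  refine ⟨s • A, t • B, hM, hN, commute_of_mul_eq_smul_mul (by decide) hM hN (γ := γ) ?_,
    semiInvariant s a, semiInvariant t b, smul_ne_smul_one_of_notMem_scalarGroup ha hs,
    smul_ne_smul_one_of_notMem_scalarGroup hb ht, hMN ▸
      smul_ne_smul_one_of_notMem_scalarGroup hab (mul_ne_zero hs ht)⟩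
  rw [smul_mul_smul_comm, smul_mul_smul_comm, hBA, smul_smul, smul_smul, mul_comm t s, mul_comm]

theorem statement10_general {K : Type} [Field K] [IsAlgClosed K]
    (hchar : ringChar K = 0 ∨ 5 ≤ ringChar K)
    (F : MvPolynomial (Fin 3) K) (hF4 : F.IsHomogeneous 4)
    (hns : QNonsingular F)
    (haut : Nonempty (projAut F ≃* Multiplicative (ZMod 2) × Multiplicative (ZMod 2))) :
    ∃ r s t : K, kEquiv F (X 0 ^ 4 + X 1 ^ 4 + X 2 ^ 4 + C r * X 0 ^ 2 * X 1 ^ 2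
      + C s * X 1 ^ 2 * X 2 ^ 2 + C t * X 2 ^ 2 * X 0 ^ 2) := by
  have h2 : (2 : K) ≠ 0 := Ring.two_ne_zero (by omega)
  obtain ⟨M, N, hMN⟩ := exists_isKleinPair hF4 haut.some
  obtain ⟨P, e, f, hP, hMP, hNP⟩ := exists_diagonalization_of_commute h2 hMN.mul_self_left
    hMN.mul_self_right hMN.commute
  have hG4 : (matAct P F).IsHomogeneous 4 := isHomogeneous_matAct hF4 P
  have hG : IsNonsingular (matAct P F) := hns.isNonsingular.matAct hP
  have heven := hG.even_of_parity_eq hG4 (by decide)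
    ((hMN.of_mul_eq_mul hP hMP hNP).natCast_eq_of_mem_support h2 hG4 (by decide))
  obtain ⟨d, hd, r, s, t, hrst⟩ :=
    exists_matAct_diagonal_eq_evenQuartic_one (hG.coeff_single_ne_zero hG4 heven) _ _ _
  have hPd : IsUnit (P * diagonal d) :=
    hP.mul (isUnit_diagonal.mpr (Pi.isUnit_iff.mpr fun i => (hd i).isUnit))
  refine ⟨r, s, t, hPd.unit, 1, ?_⟩
  rw [Units.val_one, one_smul, IsUnit.unit_spec, matAct_mul, eq_evenQuartic hG4 heven, hrst]
  simp [evenQuartic]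

theorem statement10 {K : Type} [Field K] [IsAlgClosed K]
    (hchar : ringChar K = 0 ∨ 5 ≤ ringChar K)
    (F : MvPolynomial (Fin 3) K) (hF0 : F ≠ 0) (hF4 : F.IsHomogeneous 4)
    (hns : QNonsingular F)
    (haut : Nonempty (projAut F ≃* Multiplicative (ZMod 2) × Multiplicative (ZMod 2))) :
    ∃ r s t : K, kEquiv F (X 0 ^ 4 + X 1 ^ 4 + X 2 ^ 4 + C r * X 0 ^ 2 * X 1 ^ 2
      + C s * X 1 ^ 2 * X 2 ^ 2 + C t * X 2 ^ 2 * X 0 ^ 2) :=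
  statement10_general hchar F hF4 hns haut

end
end

section
/- Let q be a prime power, let K be an algebraic closure of 𝔽_q, and let φ denote the map on n×n matrices over K that applies the q-power Frobenius x ↦ x^q to each entry. Let m ≥ 1 and let A be an n×n matrix over K satisfying the cocycle condition φ^{m−1}(A) · φ^{m−2}(A) ⋯ φ(A) · A = Id. Let P be any n×n matrix over K all of whose entries lie in the subfield 𝔽_{q^m} (equivalently, φ^m(P) = P), and set B = P + Σ_{i=1}^{m−1} φ^i(P) · φ^{i−1}(A) ⋯ φ(A) · A. Then φ(B) · A = B. -/
/-!
With `c i = φ^{i-1}(A) ⋯ φ(A) · A`, the cocycle rule `c (i + 1) = φ (c i) * A` turns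
`X ↦ φ X * A` into the index shift `φ^i(P) c i ↦ φ^{i+1}(P) c (i + 1)` on the terms of `B`.
The sum is therefore invariant as soon as its term at `m` equals its term at `0`, which is what
`c m = 1` and `φ^m(P) = P` say.
-/

namespace Finset

theorem sum_range_succ_eq_of_apply_eq {M : Type*} [AddCommMonoid M] {f : ℕ → M} {m : ℕ}
    (h : f m = f 0) : ∑ i ∈ range m, f (i + 1) = ∑ i ∈ range m, f i := by
  cases m with
  | zero => rfl
  | succ m => rw [sum_range_succ, h, ← sum_range_succ']

theorem sum_range_eq_add_sum_Icc_one {M : Type*} [AddCommMonoid M] (f : ℕ → M) {m : ℕ}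
    (hm : 1 ≤ m) : ∑ i ∈ range m, f i = f 0 + ∑ i ∈ Icc 1 (m - 1), f i := by
  obtain ⟨m, rfl⟩ := Nat.exists_eq_add_of_le' hm
  rw [sum_range_succ', Nat.add_sub_cancel, add_comm, ← Ico_add_one_right_eq_Icc,
    sum_Ico_eq_sum_range]
  simp only [add_tsub_cancel_right, add_comm 1]

end Finset

namespace RingHom

variable {R : Type*} [Semiring R] (φ : R →+* R) (A : R)

def cocycleProd (i : ℕ) : R := ((List.range i).reverse.map fun j => φ^[j] A).prod

@[simp]
theorem cocycleProd_zero : cocycleProd φ A 0 = 1 := rfl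

theorem cocycleProd_succ (i : ℕ) : cocycleProd φ A (i + 1) = φ (cocycleProd φ A i) * A := by
  simp only [cocycleProd, List.range_succ_eq_map, List.reverse_cons, List.map_append,
    List.prod_append, List.map_map, map_list_prod]
  simp [Function.comp_def, Function.iterate_succ_apply']

theorem map_iterate_mul_cocycleProd_mul (P : R) (i : ℕ) :
    φ (φ^[i] P * cocycleProd φ A i) * A = φ^[i + 1] P * cocycleProd φ A (i + 1) := by
  rw [map_mul, cocycleProd_succ, Function.iterate_succ_apply', mul_assoc]

theorem map_sum_iterate_mul_cocycleProd_mul {m : ℕ} (hA : cocycleProd φ A m = 1) {P : R}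
    (hP : φ^[m] P = P) :
    φ (∑ i ∈ Finset.range m, φ^[i] P * cocycleProd φ A i) * A =
      ∑ i ∈ Finset.range m, φ^[i] P * cocycleProd φ A i := by
  rw [map_sum, Finset.sum_mul]
  simp only [map_iterate_mul_cocycleProd_mul]
  refine Finset.sum_range_succ_eq_of_apply_eq (f := fun i => φ^[i] P * cocycleProd φ A i) ?_
  simp only [hA, hP, mul_one, Function.iterate_zero_apply, cocycleProd_zero]

end RingHom

theorem statement15_general
    (K : Type) [Field K]
    (n m : ℕ) (hm : 1 ≤ m) (A P : Matrix (Fin n) (Fin n) K)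
    (φ : Matrix (Fin n) (Fin n) K →+* Matrix (Fin n) (Fin n) K)
    (hA : ((List.range m).reverse.map fun i => (⇑φ)^[i] A).prod = 1)
    (hP : (⇑φ)^[m] P = P)
    (B : Matrix (Fin n) (Fin n) K)
    (hB : B = P + ∑ i ∈ Finset.Icc 1 (m - 1),
        (⇑φ)^[i] P * ((List.range i).reverse.map fun j => (⇑φ)^[j] A).prod) :
    φ B * A = B := by
  have hB' : B = ∑ i ∈ Finset.range m, (⇑φ)^[i] P * φ.cocycleProd A i := by
    rw [hB, Finset.sum_range_eq_add_sum_Icc_one _ hm]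
    simp only [Function.iterate_zero_apply, RingHom.cocycleProd_zero, mul_one]
    rfl
  rw [hB']
  exact φ.map_sum_iterate_mul_cocycleProd_mul A hA hP

theorem statement15 (p k : ℕ) [Fact p.Prime] (hk : k ≠ 0)
    (K : Type) [Field K] [Algebra (GaloisField p k) K] [IsAlgClosure (GaloisField p k) K]
    [ExpChar K p]
    (n m : ℕ) (hm : 1 ≤ m) (A P : Matrix (Fin n) (Fin n) K)
    (φ : Matrix (Fin n) (Fin n) K →+* Matrix (Fin n) (Fin n) K)
    (hφ : φ = (iterateFrobenius K p k).mapMatrix)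
    (hA : ((List.range m).reverse.map fun i => (⇑φ)^[i] A).prod = 1)
    (hP : (⇑φ)^[m] P = P)
    (B : Matrix (Fin n) (Fin n) K)
    (hB : B = P + ∑ i ∈ Finset.Icc 1 (m - 1),
        (⇑φ)^[i] P * ((List.range i).reverse.map fun j => (⇑φ)^[j] A).prod) :
    φ B * A = B :=
  statement15_general K n m hm A P φ hA hP B hB
end
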